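/- arXiv:0810.3132 — 4 statements merged into one kernel-verified Lean document; each statement's English description precedes it below -/
import Mathlib

section
/- The number of maximal rigid objects (up to isomorphism) in the cluster tube of rank n equals n times the number of tilting modules over the path algebra of a linearly oriented A_{n-1} quiver, i.e., n · C_{n-1} where C_{n-1} is the (n-1)-st Catalan number. -/
/-- Combinatorial model of `dim Hom_T(X, τY)` for (iso-classes of) indecomposables
`X = (a,b)`, `Y = (c,d)` of the cluster tube of rank `n`: it is `1` if
`s := (c - a) mod n` satisfies `1 ≤ s ≤ b` and `s + d ≥ b + 1`, and `0` otherwise. -/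
def hDim (n : ℕ) (x y : ZMod n × ℕ) : ℕ :=
  if 1 ≤ (y.1 - x.1).val ∧ (y.1 - x.1).val ≤ x.2 ∧ x.2 + 1 ≤ (y.1 - x.1).val + y.2
  then 1 else 0

/-- The combinatorial `dim Ext¹` in the cluster tube of rank `n`. -/
def EDim (n : ℕ) (x y : ZMod n × ℕ) : ℕ := hDim n x y + hDim n y x

/-- A maximal rigid object of the cluster tube of rank `n`, modelled as a finite set
of (iso-classes of) rigid indecomposables `(a,b)`, `a ∈ ZMod n`, `1 ≤ b ≤ n-1`,
which is rigid and maximal with this property. -/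
def IsMaxRigid (n : ℕ) (S : Finset (ZMod n × ℕ)) : Prop :=
  (∀ x ∈ S, 1 ≤ x.2 ∧ x.2 ≤ n - 1) ∧
  (∀ x ∈ S, ∀ y ∈ S, EDim n x y = 0) ∧
  (∀ z : ZMod n × ℕ, 1 ≤ z.2 → z.2 ≤ n - 1 → EDim n z z = 0 →
    (∀ x ∈ S, EDim n z x = 0) → z ∈ S)

def WCross (p q : ℕ × ℕ) : Prop := p.1 < q.1 ∧ q.1 ≤ p.2 ∧ p.2 < q.2

def WCompat (p q : ℕ × ℕ) : Prop := ¬ WCross p q ∧ ¬ WCross q p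

def MaxFam (lo hi : ℕ) (F : Finset (ℕ × ℕ)) : Prop :=
  (∀ p ∈ F, lo ≤ p.1 ∧ p.1 < p.2 ∧ p.2 ≤ hi) ∧
  (∀ p ∈ F, ∀ q ∈ F, WCompat p q) ∧
  (∀ p : ℕ × ℕ, lo ≤ p.1 → p.1 < p.2 → p.2 ≤ hi → (∀ q ∈ F, WCompat p q) → p ∈ F)

lemma wcompat_of_le {p q : ℕ × ℕ} (h : q.2 < p.1 ∨ p.2 < q.1 ∨
    (p.1 ≤ q.1 ∧ q.2 ≤ p.2) ∨ (q.1 ≤ p.1 ∧ p.2 ≤ q.2)) : WCompat p q := by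
  constructor <;> rintro ⟨h1, h2, h3⟩ <;> omega

lemma full_mem {lo hi : ℕ} {F : Finset (ℕ × ℕ)} (h : MaxFam lo hi F) (hlt : lo < hi) :
    (lo, hi) ∈ F := by
  refine h.2.2 (lo, hi) le_rfl hlt le_rfl (fun q hq => ?_)
  have := h.1 q hq
  exact wcompat_of_le (by dsimp only; omega)

lemma maxfam_lo_lo (lo : ℕ) {F : Finset (ℕ × ℕ)} : MaxFam lo lo F ↔ F = ∅ := by
  constructor
  · intro h
    refine Finset.eq_empty_iff_forall_notMem.2 (fun p hp => ?_)
    have := h.1 p hp; omega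
  · rintro rfl
    exact ⟨by simp, by simp, fun p h1 h2 h3 _ => absurd h2 (by omega)⟩

lemma maxfam_combine {lo k hi : ℕ} (hk1 : lo ≤ k) (hk2 : k < hi)
    {F1 F2 : Finset (ℕ × ℕ)} (h1 : MaxFam lo k F1) (h2 : MaxFam (k+1) hi F2) :
    MaxFam lo hi (insert (lo, hi) (F1 ∪ F2)) := by
  have b1 := h1.1; have b2 := h2.1
  refine ⟨?_, ?_, ?_⟩
  · intro p hp
    simp only [Finset.mem_insert, Finset.mem_union] at hp
    rcases hp with rfl | hp | hp
    · exact ⟨le_rfl, by omega, le_rfl⟩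
    · have := b1 p hp; omega
    · have := b2 p hp; omega
  · intro p hp q hq
    simp only [Finset.mem_insert, Finset.mem_union] at hp hq
    rcases hp with rfl | hp | hp <;> rcases hq with rfl | hq | hq
    · exact wcompat_of_le (by omega)
    · have := b1 q hq; exact wcompat_of_le (by dsimp only; omega)
    · have := b2 q hq; exact wcompat_of_le (by dsimp only; omega)
    · have := b1 p hp; exact wcompat_of_le (by dsimp only; omega)
    · exact h1.2.1 p hp q hq
    · have := b1 p hp; have := b2 q hq; exact wcompat_of_le (by omega)
    · have := b2 p hp; exact wcompat_of_le (by dsimp only; omega)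
    · have := b1 q hq; have := b2 p hp; exact wcompat_of_le (by omega)
    · exact h2.2.1 p hp q hq
  · intro p hlo hpp hhi hcomp
    simp only [Finset.mem_insert, Finset.mem_union]
    by_cases hv : p.2 ≤ k
    · refine Or.inr (Or.inl (h1.2.2 p hlo hpp hv (fun q hq => ?_)))
      exact hcomp q (by simp [Finset.mem_union, hq])
    by_cases hu : k + 1 ≤ p.1
    · refine Or.inr (Or.inr (h2.2.2 p hu hpp hhi (fun q hq => ?_)))
      exact hcomp q (by simp [Finset.mem_union, hq])
    left
    have hp1 : p.1 = lo := by
      by_contra hne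
      have hlk : lo < k := by omega
      have hmem : (lo, k) ∈ F1 := full_mem h1 hlk
      have := hcomp (lo, k) (by simp [Finset.mem_union, hmem])
      exact this.2 ⟨by omega, by dsimp only; omega, by dsimp only; omega⟩
    have hp2 : p.2 = hi := by
      by_contra hne
      have hkh : k + 1 < hi := by omega
      have hmem : (k+1, hi) ∈ F2 := full_mem h2 hkh
      have := hcomp (k+1, hi) (by simp [Finset.mem_union, hmem])
      exact this.1 ⟨by omega, by dsimp only; omega, by dsimp only; omega⟩
    rw [Prod.ext_iff]; exact ⟨hp1, hp2⟩

lemma maxfam_split_aux {lo hi k : ℕ} {F : Finset (ℕ × ℕ)} (h : MaxFam lo hi F)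
    (hlt : lo < hi) (hk1 : lo ≤ k) (hk2 : k < hi)
    (hmax : ∀ b, lo < b → b < hi → (lo, b) ∈ F → b ≤ k)
    (hLK : lo < k → (lo, k) ∈ F) :
    MaxFam lo k (F.filter (fun p => p.2 ≤ k)) ∧
    MaxFam (k+1) hi (F.filter (fun p => k+1 ≤ p.1)) ∧
    F = insert (lo, hi) ((F.filter (fun p => p.2 ≤ k)) ∪ (F.filter (fun p => k+1 ≤ p.1))) := by
  have hpart : ∀ p ∈ F, p = (lo, hi) ∨ p.2 ≤ k ∨ k + 1 ≤ p.1 := by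
    intro p hp
    by_contra hc
    push_neg at hc
    obtain ⟨hne, hv, hu⟩ := hc
    have hb := h.1 p hp
    by_cases h1 : p.1 = lo
    · by_cases h2 : p.2 = hi
      · exact hne (Prod.ext h1 h2)
      · have : (lo, p.2) ∈ F := by rw [← h1]; exact hp
        have := hmax p.2 (by omega) (by omega) this
        omega
    · have hlk : lo < k := by omega
      have hmem : (lo, k) ∈ F := hLK hlk
      have := h.2.1 (lo, k) hmem p hp
      exact this.1 ⟨by omega, by dsimp only; omega, by dsimp only; omega⟩
  refine ⟨⟨?_, ?_, ?_⟩, ⟨?_, ?_, ?_⟩, ?_⟩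
  · intro p hp
    rw [Finset.mem_filter] at hp
    have := h.1 p hp.1; omega
  · intro p hp q hq
    rw [Finset.mem_filter] at hp hq
    exact h.2.1 p hp.1 q hq.1
  · intro p hplo hpp hpk hcomp
    rw [Finset.mem_filter]
    refine ⟨h.2.2 p hplo hpp (by omega) (fun q hq => ?_), hpk⟩
    rcases hpart q hq with rfl | hq2 | hq2
    · exact wcompat_of_le (by dsimp only; omega)
    · exact hcomp q (Finset.mem_filter.2 ⟨hq, hq2⟩)
    · exact wcompat_of_le (by omega)
  · intro p hp
    rw [Finset.mem_filter] at hp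
    have := h.1 p hp.1; omega
  · intro p hp q hq
    rw [Finset.mem_filter] at hp hq
    exact h.2.1 p hp.1 q hq.1
  · intro p hplo hpp hpk hcomp
    rw [Finset.mem_filter]
    refine ⟨h.2.2 p (by omega) hpp hpk (fun q hq => ?_), hplo⟩
    rcases hpart q hq with rfl | hq2 | hq2
    · exact wcompat_of_le (by dsimp only; omega)
    · exact wcompat_of_le (by omega)
    · exact hcomp q (Finset.mem_filter.2 ⟨hq, hq2⟩)
  · ext p
    simp only [Finset.mem_insert, Finset.mem_union, Finset.mem_filter]
    constructor
    · intro hp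
      rcases hpart p hp with h' | h' | h'
      · exact Or.inl h'
      · exact Or.inr (Or.inl ⟨hp, h'⟩)
      · exact Or.inr (Or.inr ⟨hp, h'⟩)
    · rintro (rfl | ⟨hp, _⟩ | ⟨hp, _⟩)
      · exact full_mem h hlt
      · exact hp
      · exact hp

lemma maxfam_split {lo hi : ℕ} {F : Finset (ℕ × ℕ)} (h : MaxFam lo hi F) (hlt : lo < hi) :
    ∃ k, lo ≤ k ∧ k < hi ∧
      MaxFam lo k (F.filter (fun p => p.2 ≤ k)) ∧
      MaxFam (k+1) hi (F.filter (fun p => k+1 ≤ p.1)) ∧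
      F = insert (lo, hi) ((F.filter (fun p => p.2 ≤ k)) ∪ (F.filter (fun p => k+1 ≤ p.1))) := by
  classical
  by_cases hex : ∃ b, lo < b ∧ b < hi ∧ (lo, b) ∈ F
  · set P : ℕ → Prop := fun b => lo < b ∧ b < hi ∧ (lo, b) ∈ F with hP
    obtain ⟨b, hb⟩ := hex
    set k := Nat.findGreatest P hi with hk
    have hPk : P k := Nat.findGreatest_spec (m := b) (by omega) hb
    have hgr : ∀ c, P c → c ≤ k := fun c hc => Nat.le_findGreatest (by omega) hc
    obtain ⟨hk1, hk2, hk3⟩ := hPk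
    obtain ⟨a1, a2, a3⟩ := maxfam_split_aux h hlt (le_of_lt hk1) hk2
      (fun c h1 h2 h3 => hgr c ⟨h1, h2, h3⟩) (fun _ => hk3)
    exact ⟨k, le_of_lt hk1, hk2, a1, a2, a3⟩
  · push_neg at hex
    obtain ⟨a1, a2, a3⟩ := maxfam_split_aux h hlt (le_refl lo) hlt
      (fun c h1 h2 h3 => absurd h3 (by exact fun h' => absurd h' (by
        intro hmem; exact absurd hmem (hex c h1 h2)))) (fun hc => absurd hc (lt_irrefl lo))
    exact ⟨lo, le_refl lo, hlt, a1, a2, a3⟩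

lemma maxfam_decomp_eq {lo hi k k' : ℕ} {F1 F2 F1' F2' : Finset (ℕ × ℕ)}
    (hk1 : lo ≤ k) (hk2 : k < hi) (hk1' : lo ≤ k') (hk2' : k' < hi)
    (h1 : MaxFam lo k F1) (h2 : MaxFam (k+1) hi F2)
    (h1' : MaxFam lo k' F1') (h2' : MaxFam (k'+1) hi F2')
    (heq : insert (lo, hi) (F1 ∪ F2) = insert (lo, hi) (F1' ∪ F2')) :
    k = k' ∧ F1 = F1' ∧ F2 = F2' := by
  have key : ∀ {a a' : ℕ} {G1 G2 G1' G2' : Finset (ℕ × ℕ)}, lo ≤ a → a < hi → lo ≤ a' → a' < hi →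
      MaxFam lo a G1 → MaxFam (a+1) hi G2 → MaxFam lo a' G1' → MaxFam (a'+1) hi G2' →
      insert (lo, hi) (G1 ∪ G2) = insert (lo, hi) (G1' ∪ G2') → ¬ (a < a') := by
    intro a a' G1 G2 G1' G2' ha1 ha2 ha1' ha2' g1 g2 g1' g2' he hlt
    have hmem : (lo, a') ∈ G1' := full_mem g1' (by omega)
    have : (lo, a') ∈ insert (lo, hi) (G1 ∪ G2) := by
      rw [he]; simp [Finset.mem_union, hmem]
    simp only [Finset.mem_insert, Finset.mem_union] at this
    rcases this with h' | h' | h'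
    · simp only [Prod.mk.injEq] at h'
      omega
    · have := g1.1 _ h'; dsimp at this; omega
    · have := g2.1 _ h'; dsimp at this; omega
  have hkk : k = k' := by
    rcases lt_trichotomy k k' with h' | h' | h'
    · exact absurd h' (key hk1 hk2 hk1' hk2' h1 h2 h1' h2' heq)
    · exact h'
    · exact absurd h' (key hk1' hk2' hk1 hk2 h1' h2' h1 h2 heq.symm)
  subst hkk
  have hsub : ∀ {G1 G2 G1' G2' : Finset (ℕ × ℕ)},
      MaxFam lo k G1 → MaxFam (k+1) hi G2 → MaxFam lo k G1' → MaxFam (k+1) hi G2' →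
      insert (lo, hi) (G1 ∪ G2) = insert (lo, hi) (G1' ∪ G2') → G1 ⊆ G1' := by
    intro G1 G2 G1' G2' g1 g2 g1' g2' he p hp
    have hb := g1.1 p hp
    have : p ∈ insert (lo, hi) (G1' ∪ G2') := by
      rw [← he]; simp [Finset.mem_union, hp]
    simp only [Finset.mem_insert, Finset.mem_union] at this
    rcases this with h' | h' | h'
    · subst h'; dsimp at hb; omega
    · exact h'
    · have := g2'.1 p h'; omega
  have hsub2 : ∀ {G1 G2 G1' G2' : Finset (ℕ × ℕ)},
      MaxFam lo k G1 → MaxFam (k+1) hi G2 → MaxFam lo k G1' → MaxFam (k+1) hi G2' →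
      insert (lo, hi) (G1 ∪ G2) = insert (lo, hi) (G1' ∪ G2') → G2 ⊆ G2' := by
    intro G1 G2 G1' G2' g1 g2 g1' g2' he p hp
    have hb := g2.1 p hp
    have : p ∈ insert (lo, hi) (G1' ∪ G2') := by
      rw [← he]; simp [Finset.mem_union, hp]
    simp only [Finset.mem_insert, Finset.mem_union] at this
    rcases this with h' | h' | h'
    · subst h'; dsimp at hb; omega
    · have := g1'.1 p h'; omega
    · exact h'
  exact ⟨rfl, le_antisymm (hsub h1 h2 h1' h2' heq) (hsub h1' h2' h1 h2 heq.symm),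
    le_antisymm (hsub2 h1 h2 h1' h2' heq) (hsub2 h1' h2' h1 h2 heq.symm)⟩

instance maxfam_finite (lo hi : ℕ) : Finite {F : Finset (ℕ × ℕ) // MaxFam lo hi F} := by
  classical
  have hmem : ∀ F : {F : Finset (ℕ × ℕ) // MaxFam lo hi F},
      F.1 ∈ (Finset.Icc lo hi ×ˢ Finset.Icc lo hi).powerset := by
    intro F
    rw [Finset.mem_powerset]
    intro p hp
    have := F.2.1 p hp
    rw [Finset.mem_product, Finset.mem_Icc, Finset.mem_Icc]
    omega
  apply Finite.of_injective (fun F => (⟨F.1, hmem F⟩ :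
    {x // x ∈ (Finset.Icc lo hi ×ˢ Finset.Icc lo hi).powerset}))
  intro F G h
  simp only [Subtype.mk.injEq] at h
  exact Subtype.ext h

lemma card_sigma_fin {m : ℕ} (X : Fin m → Type) [∀ i, Finite (X i)] :
    Nat.card (Σ i, X i) = ∑ i, Nat.card (X i) := by
  letI : ∀ i, Fintype (X i) := fun i => Fintype.ofFinite _
  simp only [Nat.card_eq_fintype_card, Fintype.card_sigma]

theorem wing_count : ∀ (m lo : ℕ),
    Nat.card {F : Finset (ℕ × ℕ) // MaxFam lo (lo + m) F} = catalan m := by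
  intro m
  induction m using Nat.strong_induction_on with
  | _ m ih =>
  intro lo
  cases m with
  | zero =>
    haveI : Unique {F : Finset (ℕ × ℕ) // MaxFam lo (lo + 0) F} :=
      { default := ⟨∅, (maxfam_lo_lo lo).2 rfl⟩
        uniq := fun F => Subtype.ext (by
          have := (maxfam_lo_lo lo).1 F.2
          simp [this]) }
    rw [catalan_zero]
    exact Nat.card_unique
  | succ m =>
    set W : Fin (m+1) → Type := fun k =>
      ({F : Finset (ℕ × ℕ) // MaxFam lo (lo + (k : ℕ)) F} ×
       {F : Finset (ℕ × ℕ) // MaxFam (lo + (k : ℕ) + 1) (lo + (m+1)) F}) with hW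
    have hg : ∀ x : Σ k, W k, MaxFam lo (lo + (m+1))
        (insert (lo, lo + (m+1)) (x.2.1.1 ∪ x.2.2.1)) := by
      rintro ⟨k, ⟨F1, h1⟩, ⟨F2, h2⟩⟩
      exact maxfam_combine (Nat.le_add_right _ _) (by have := k.isLt; omega) h1 h2
    set g : (Σ k, W k) → {F : Finset (ℕ × ℕ) // MaxFam lo (lo + (m+1)) F} :=
      fun x => ⟨insert (lo, lo + (m+1)) (x.2.1.1 ∪ x.2.2.1), hg x⟩ with hgdef
    have hbij : Function.Bijective g := by
      constructor
      · rintro ⟨k, ⟨F1, h1⟩, ⟨F2, h2⟩⟩ ⟨k', ⟨F1', h1'⟩, ⟨F2', h2'⟩⟩ h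
        simp only [hgdef, Subtype.mk.injEq] at h
        obtain ⟨hk, e1, e2⟩ := maxfam_decomp_eq (Nat.le_add_right _ _)
          (by have := k.isLt; omega) (Nat.le_add_right _ _) (by have := k'.isLt; omega)
          h1 h2 h1' h2' h
        have hk' : k = k' := Fin.ext (by omega)
        subst hk'
        subst e1; subst e2
        rfl
      · rintro ⟨F, hF⟩
        obtain ⟨k, hk1, hk2, h1, h2, heq⟩ := maxfam_split hF (by omega)
        have hi1 : (⟨k - lo, by omega⟩ : Fin (m+1)) = ⟨k - lo, by omega⟩ := rfl
        refine ⟨⟨⟨k - lo, by omega⟩,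
          ⟨F.filter (fun p => p.2 ≤ k), by
            have : lo + (k - lo) = k := by omega
            rw [this]; exact h1⟩,
          ⟨F.filter (fun p => k + 1 ≤ p.1), by
            have : lo + (k - lo) = k := by omega
            rw [this]; exact h2⟩⟩, ?_⟩
        exact Subtype.ext heq.symm
    calc Nat.card {F : Finset (ℕ × ℕ) // MaxFam lo (lo + (m+1)) F}
        = Nat.card (Σ k, W k) := (Nat.card_congr (Equiv.ofBijective g hbij)).symm
      _ = ∑ k : Fin (m+1), Nat.card (W k) := card_sigma_fin W
      _ = ∑ k : Fin (m+1), catalan k * catalan (m - k) := by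
          refine Finset.sum_congr rfl (fun k _ => ?_)
          rw [hW]
          rw [Nat.card_prod]
          rw [ih k k.isLt lo]
          have e2 : lo + (k : ℕ) + 1 + (m - (k : ℕ)) = lo + (m+1) := by
            have := k.isLt; omega
          rw [← e2, ih (m - (k : ℕ)) (by omega) (lo + (k : ℕ) + 1)]
      _ = catalan (m + 1) := (catalan_succ m).symm

lemma edim_zero_iff (n : ℕ) (x y : ZMod n × ℕ) : EDim n x y = 0 ↔
    (¬ (1 ≤ (y.1 - x.1).val ∧ (y.1 - x.1).val ≤ x.2 ∧ x.2 + 1 ≤ (y.1 - x.1).val + y.2)) ∧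
    (¬ (1 ≤ (x.1 - y.1).val ∧ (x.1 - y.1).val ≤ y.2 ∧ y.2 + 1 ≤ (x.1 - y.1).val + x.2)) := by
  unfold EDim hDim; split_ifs <;> simp_all

lemma edim_self (n : ℕ) (hn : 2 ≤ n) (z : ZMod n × ℕ) : EDim n z z = 0 := by
  haveI : NeZero n := ⟨by omega⟩
  rw [edim_zero_iff, sub_self, ZMod.val_zero]
  omega

lemma edim_comm (n : ℕ) (x y : ZMod n × ℕ) : EDim n x y = EDim n y x :=
  Nat.add_comm _ _

lemma val_cast_sub {n : ℕ} (hn : 2 ≤ n) {i j : ℕ} (hi : i < n) (hj : j < n) :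
    ((j : ZMod n) - (i : ZMod n)).val = if i ≤ j then j - i else n - (i - j) := by
  haveI : NeZero n := ⟨by omega⟩
  split_ifs with h
  · rw [← Nat.cast_sub h, ZMod.val_cast_of_lt (by omega)]
  · have e : ((n + j - i : ℕ) : ZMod n) = (j : ZMod n) - i := by
      rw [Nat.cast_sub (by omega)]; push_cast; rw [ZMod.natCast_self]; ring
    rw [← e, ZMod.val_cast_of_lt (by omega)]; omega

def ofW (n : ℕ) (a : ZMod n) (p : ℕ × ℕ) : ZMod n × ℕ := (a + (p.1 : ZMod n), p.2 - p.1)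

def toW (n : ℕ) (a : ZMod n) (z : ZMod n × ℕ) : ℕ × ℕ :=
  ((z.1 - a).val, (z.1 - a).val + z.2)

lemma ofW_toW {n : ℕ} (hn : 2 ≤ n) (a : ZMod n) (z : ZMod n × ℕ) :
    ofW n a (toW n a z) = z := by
  haveI : NeZero n := ⟨by omega⟩
  unfold ofW toW
  dsimp only
  rw [ZMod.natCast_rightInverse (z.1 - a)]
  exact Prod.ext (by ring) (by omega)

lemma toW_ofW {n : ℕ} (hn : 2 ≤ n) (a : ZMod n) {p : ℕ × ℕ} (h1 : p.1 ≤ p.2) (h2 : p.1 < n) :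
    toW n a (ofW n a p) = p := by
  haveI : NeZero n := ⟨by omega⟩
  unfold ofW toW
  dsimp only
  rw [add_sub_cancel_left, ZMod.val_cast_of_lt h2]
  exact Prod.ext rfl (by omega)

lemma trans_lemma {n : ℕ} (hn : 2 ≤ n) (a : ZMod n) {p q : ℕ × ℕ}
    (hp : p.1 < p.2) (hp2 : p.2 ≤ n - 1) (hq : q.1 < q.2) (hq2 : q.2 ≤ n - 1) :
    EDim n (ofW n a p) (ofW n a q) = 0 ↔ WCompat p q := by
  rw [edim_zero_iff]
  have h1 : (ofW n a q).1 - (ofW n a p).1 = (q.1 : ZMod n) - (p.1 : ZMod n) := by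
    unfold ofW; dsimp only; ring
  have h2 : (ofW n a p).1 - (ofW n a q).1 = (p.1 : ZMod n) - (q.1 : ZMod n) := by
    unfold ofW; dsimp only; ring
  rw [h1, h2, val_cast_sub hn (by omega) (by omega), val_cast_sub hn (by omega) (by omega)]
  show _ ↔ WCompat p q
  unfold WCompat WCross ofW
  dsimp only
  split_ifs <;> constructor <;> rintro ⟨u, v⟩ <;> constructor <;> intro h' <;> omega

lemma top_compat {n : ℕ} (hn : 2 ≤ n) (a : ZMod n) (z : ZMod n × ℕ)
    (hd2 : z.2 ≤ n - 1) :
    EDim n ((a, n-1) : ZMod n × ℕ) z = 0 ↔ (z.1 - a).val + z.2 ≤ n - 1 := by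
  haveI : NeZero n := ⟨by omega⟩
  rw [edim_zero_iff]
  by_cases hz : z.1 = a
  · rw [hz, sub_self, ZMod.val_zero]
    dsimp only
    omega
  · have h0 : z.1 - a ≠ 0 := sub_ne_zero.2 hz
    haveI : NeZero (z.1 - a) := ⟨h0⟩
    have hs1 : 1 ≤ (z.1 - a).val := by
      rcases Nat.eq_zero_or_pos (z.1 - a).val with h | h
      · exact absurd ((ZMod.val_eq_zero _).1 h) h0
      · omega
    have hs2 : (z.1 - a).val < n := ZMod.val_lt _
    have hneg : (a - z.1).val = n - (z.1 - a).val := by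
      have e : a - z.1 = -(z.1 - a) := by ring
      rw [e, ZMod.val_neg_of_ne_zero]
    rw [hneg]
    dsimp only
    omega

lemma ofW_top {n : ℕ} (hn : 2 ≤ n) (a : ZMod n) :
    ofW n a (0, n-1) = ((a, n-1) : ZMod n × ℕ) := by
  unfold ofW
  simp

lemma image_isMaxRigid {n : ℕ} (hn : 2 ≤ n) (a : ZMod n) {F : Finset (ℕ × ℕ)}
    (hF : MaxFam 0 (n-1) F) : IsMaxRigid n (F.image (ofW n a)) := by
  refine ⟨?_, ?_, ?_⟩
  · intro x hx
    obtain ⟨p, hp, rfl⟩ := Finset.mem_image.1 hx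
    have := hF.1 p hp
    unfold ofW
    dsimp only
    omega
  · intro x hx y hy
    obtain ⟨p, hp, rfl⟩ := Finset.mem_image.1 hx
    obtain ⟨q, hq, rfl⟩ := Finset.mem_image.1 hy
    have bp := hF.1 p hp
    have bq := hF.1 q hq
    exact (trans_lemma hn a (by omega) (by omega) (by omega) (by omega)).2 (hF.2.1 p hp q hq)
  · intro z hz1 hz2 _ hcomp
    have htopF : (0, n-1) ∈ F := full_mem hF (by omega)
    have htop : ((a, n-1) : ZMod n × ℕ) ∈ F.image (ofW n a) := by
      rw [← ofW_top hn a]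
      exact Finset.mem_image_of_mem _ htopF
    have hb : (z.1 - a).val + z.2 ≤ n - 1 := by
      rw [← top_compat hn a z hz2, edim_comm]
      exact hcomp _ htop
    set p : ℕ × ℕ := toW n a z with hpdef
    have hzp : z = ofW n a p := (ofW_toW hn a z).symm
    have hp1 : p.1 < p.2 := by rw [hpdef]; unfold toW; dsimp only; omega
    have hp2 : p.2 ≤ n - 1 := by rw [hpdef]; unfold toW; dsimp only; exact hb
    have hpF : p ∈ F := by
      refine hF.2.2 p (Nat.zero_le _) hp1 hp2 (fun q hq => ?_)
      have bq := hF.1 q hq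
      rw [← trans_lemma hn a hp1 hp2 (by omega) (by omega), ← hzp]
      exact hcomp _ (Finset.mem_image_of_mem _ hq)
    rw [hzp]
    exact Finset.mem_image_of_mem _ hpF

lemma exists_top {n : ℕ} (hn : 2 ≤ n) {S : Finset (ZMod n × ℕ)} (hS : IsMaxRigid n S) :
    ∃ c : ZMod n, ((c, n-1) : ZMod n × ℕ) ∈ S ∧
      ∀ w ∈ S, (w.1 - c).val + w.2 ≤ n - 1 := by
  haveI : NeZero n := ⟨by omega⟩
  have hne : S.Nonempty := by
    by_contra h
    rw [Finset.not_nonempty_iff_eq_empty] at h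
    have : ((0 : ZMod n), 1) ∈ S :=
      hS.2.2 (0, 1) le_rfl (by omega) (edim_self n hn _) (fun x hx => by simp [h] at hx)
    simp [h] at this
  obtain ⟨z, hzS, hzmax⟩ : ∃ z ∈ S, ∀ w ∈ S, w.2 ≤ z.2 := by
    have hne' : (S.image Prod.snd).Nonempty := hne.image _
    obtain ⟨z, hzS, hz⟩ := Finset.mem_image.1 (Finset.max'_mem _ hne')
    exact ⟨z, hzS, fun w hw => hz ▸ Finset.le_max' _ _ (Finset.mem_image_of_mem _ hw)⟩
  set c := z.1 with hc
  have hwing : ∀ w ∈ S, (w.1 - c).val + w.2 ≤ n - 1 := by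
    intro w hw
    have hwb := hS.1 w hw
    have hzb := hS.1 z hzS
    have hwz := hzmax w hw
    by_cases hcw : w.1 = c
    · rw [hcw, sub_self, ZMod.val_zero]; omega
    · have h0 : w.1 - c ≠ 0 := sub_ne_zero.2 hcw
      haveI : NeZero (w.1 - c) := ⟨h0⟩
      have hs1 : 1 ≤ (w.1 - c).val := by
        rcases Nat.eq_zero_or_pos (w.1 - c).val with h | h
        · exact absurd ((ZMod.val_eq_zero _).1 h) h0
        · omega
      have hs2 : (w.1 - c).val < n := ZMod.val_lt _
      have hneg : (c - w.1).val = n - (w.1 - c).val := by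
        have e : c - w.1 = -(w.1 - c) := by ring
        rw [e, ZMod.val_neg_of_ne_zero]
      have hE := (edim_zero_iff n z w).1 (hS.2.1 z hzS w hw)
      rw [← hc] at hE
      rw [hneg] at hE
      obtain ⟨hE1, hE2⟩ := hE
      omega
  refine ⟨c, ?_, hwing⟩
  refine hS.2.2 (c, n-1) (by omega) le_rfl (edim_self n hn _) (fun x hx => ?_)
  exact (top_compat hn c x (hS.1 x hx).2).2 (hwing x hx)

theorem main_bij {n : ℕ} (hn : 2 ≤ n) :
    Nat.card {S : Finset (ZMod n × ℕ) // IsMaxRigid n S} = n * catalan (n - 1) := by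
  haveI : NeZero n := ⟨by omega⟩
  set Φ : (ZMod n × {F : Finset (ℕ × ℕ) // MaxFam 0 (n-1) F}) →
      {S : Finset (ZMod n × ℕ) // IsMaxRigid n S} :=
    fun x => ⟨x.2.1.image (ofW n x.1), image_isMaxRigid hn x.1 x.2.2⟩ with hΦ
  have hbij : Function.Bijective Φ := by
    constructor
    · rintro ⟨a, F, hF⟩ ⟨a', F', hF'⟩ h
      simp only [hΦ, Subtype.mk.injEq] at h
      have htop : ∀ (b : ZMod n) (G : Finset (ℕ × ℕ)), MaxFam 0 (n-1) G →
          ∀ x ∈ G.image (ofW n b), x.2 = n - 1 → x = (b, n-1) := by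
        intro b G hG x hx hx2
        obtain ⟨p, hp, rfl⟩ := Finset.mem_image.1 hx
        have bp := hG.1 p hp
        unfold ofW at hx2 ⊢
        dsimp only at hx2 ⊢
        have hp1 : p.1 = 0 := by omega
        have hp2 : p.2 = n - 1 := by omega
        rw [hp1, hp2]
        norm_num
      have haa : a = a' := by
        have h1 : ((a, n-1) : ZMod n × ℕ) ∈ F.image (ofW n a) := by
          rw [← ofW_top hn a]
          exact Finset.mem_image_of_mem _ (full_mem hF (by omega))
        have h2 : ((a, n-1) : ZMod n × ℕ) ∈ Finset.image (ofW n a') F' := by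
          rw [← h]; exact h1
        have := htop a' F' hF' _ h2 rfl
        exact (Prod.ext_iff.1 this).1
      subst haa
      have hFF : F = F' := by
        ext p
        constructor
        · intro hp
          have bp := hF.1 p hp
          have : ofW n a p ∈ Finset.image (ofW n a) F' := by
            rw [← h]; exact Finset.mem_image_of_mem _ hp
          obtain ⟨q, hq, hqe⟩ := Finset.mem_image.1 this
          have bq := hF'.1 q hq
          have : q = p := by
            have e1 := toW_ofW hn a (le_of_lt bq.2.1) (by omega)
            have e2 := toW_ofW hn a (le_of_lt bp.2.1) (by omega)
            rw [← e1, ← e2, hqe]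
          rwa [← this]
        · intro hp
          have bp := hF'.1 p hp
          have : ofW n a p ∈ Finset.image (ofW n a) F := by
            rw [h]; exact Finset.mem_image_of_mem _ hp
          obtain ⟨q, hq, hqe⟩ := Finset.mem_image.1 this
          have bq := hF.1 q hq
          have : q = p := by
            have e1 := toW_ofW hn a (le_of_lt bq.2.1) (by omega)
            have e2 := toW_ofW hn a (le_of_lt bp.2.1) (by omega)
            rw [← e1, ← e2, hqe]
          rwa [← this]
      rw [Prod.ext_iff]
      exact ⟨rfl, Subtype.ext hFF⟩
    · rintro ⟨S, hS⟩
      obtain ⟨c, hcS, hwing⟩ := exists_top hn hS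
      set F : Finset (ℕ × ℕ) := S.image (toW n c) with hFdef
      have hbnd : ∀ p ∈ F, 0 ≤ p.1 ∧ p.1 < p.2 ∧ p.2 ≤ n - 1 := by
        intro p hp
        rw [hFdef] at hp
        obtain ⟨z, hz, rfl⟩ := Finset.mem_image.1 hp
        have h1 := hS.1 z hz
        have h2 := hwing z hz
        unfold toW
        dsimp only
        omega
      have hF : MaxFam 0 (n-1) F := by
        refine ⟨fun p hp => ⟨Nat.zero_le _, (hbnd p hp).2⟩, ?_, ?_⟩
        · intro p hp q hq
          have bp := hbnd p hp
          have bq := hbnd q hq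
          rw [hFdef] at hp hq
          obtain ⟨z, hz, rfl⟩ := Finset.mem_image.1 hp
          obtain ⟨w, hw, rfl⟩ := Finset.mem_image.1 hq
          rw [← trans_lemma hn c (by omega) (by omega) (by omega) (by omega),
            ofW_toW hn, ofW_toW hn]
          exact hS.2.1 z hz w hw
        · intro p hp0 hp1 hp2 hcomp
          set z := ofW n c p with hzdef
          have hz2 : z.2 = p.2 - p.1 := rfl
          have hzS : z ∈ S := by
            refine hS.2.2 z (by omega) (by omega) (edim_self n hn _) (fun x hx => ?_)
            have bx := hbnd _ (by rw [hFdef]; exact Finset.mem_image_of_mem (toW n c) hx)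
            rw [hzdef, ← ofW_toW hn c x]
            rw [trans_lemma hn c hp1 hp2 (by omega) (by omega)]
            exact hcomp _ (by rw [hFdef]; exact Finset.mem_image_of_mem _ hx)
          have : toW n c z = p := toW_ofW hn c (le_of_lt hp1) (by omega)
          rw [← this, hFdef]
          exact Finset.mem_image_of_mem _ hzS
      refine ⟨⟨c, ⟨F, hF⟩⟩, ?_⟩
      apply Subtype.ext
      show F.image (ofW n c) = S
      rw [hFdef, Finset.image_image]
      refine (Finset.image_congr (fun z hz => ofW_toW hn c z)).trans ?_
      exact Finset.image_id
  rw [Nat.card_congr (Equiv.ofBijective Φ hbij).symm, Nat.card_prod, Nat.card_zmod]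
  have hw := wing_count (n-1) 0
  rw [Nat.zero_add] at hw
  rw [hw]


/-- The number of maximal rigid objects (up to isomorphism) in the cluster tube of
rank `n` is `n` times the `(n-1)`-st Catalan number, the number of tilting modules
over the path algebra of a linearly oriented `A_{n-1}` quiver. -/
theorem stmt_11 (n : ℕ) (hn : 2 ≤ n) :
    Nat.card {S : Finset (ZMod n × ℕ) // IsMaxRigid n S} = n * catalan (n - 1) := by
  exact main_bij hn
end

section
/- Every centrally symmetric triangulation of a regular 2n-gon contains exactly one diameter. -/
/-- `x` lies strictly between `a` and `b` in the cyclic order on `ZMod (2n)`. -/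
def StrictBtw (n : ℕ) (a b x : ZMod (2 * n)) : Prop :=
  0 < (x - a).val ∧ (x - a).val < (b - a).val

/-- `p` is a diagonal of the `2n`-gon: its endpoints are neither equal nor adjacent. -/
def IsDiagonal (n : ℕ) (p : Sym2 (ZMod (2 * n))) : Prop :=
  ∀ a b : ZMod (2 * n), p = s(a, b) → a ≠ b ∧ a ≠ b + 1 ∧ b ≠ a + 1

/-- Two diagonals cross (in their interiors): they have pairwise distinct
endpoints and exactly one endpoint of the second lies strictly between the
endpoints of the first in the cyclic order. -/
def Crosses (n : ℕ) (p q : Sym2 (ZMod (2 * n))) : Prop :=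
  ∃ a b c d : ZMod (2 * n), p = s(a, b) ∧ q = s(c, d) ∧
    c ≠ a ∧ c ≠ b ∧ d ≠ a ∧ d ≠ b ∧
    Xor' (StrictBtw n a b c) (StrictBtw n a b d)

/-- A triangulation of the `2n`-gon: a maximal set of pairwise non-crossing diagonals. -/
def IsTriangulation (n : ℕ) (S : Set (Sym2 (ZMod (2 * n)))) : Prop :=
  (∀ p ∈ S, IsDiagonal n p) ∧
  (∀ p ∈ S, ∀ q ∈ S, ¬ Crosses n p q) ∧
  (∀ p, IsDiagonal n p → (∀ q ∈ S, ¬ Crosses n p q ∧ ¬ Crosses n q p) → p ∈ S)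

/-- A set of diagonals is centrally symmetric if it is invariant under the
rotation `x ↦ x + n`. -/
def IsCentrallySymmetric (n : ℕ) (S : Set (Sym2 (ZMod (2 * n)))) : Prop :=
  ∀ p ∈ S, Sym2.map (· + (n : ZMod (2 * n))) p ∈ S

/-- `p` is a diameter `[a, a+n]`. -/
def IsDiameter (n : ℕ) (p : Sym2 (ZMod (2 * n))) : Prop :=
  ∃ a : ZMod (2 * n), p = s(a, a + (n : ZMod (2 * n)))

/-!
Measure the position of a vertex `x` relative to a base vertex `w` by `(x - w).val ∈ [0, 2n)`:
two diagonals cross exactly when the positions of their endpoints interleave. Two distinct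
diameters cross, which gives uniqueness.

For existence, suppose the centrally symmetric triangulation `S` has no diameter and let `[a, d]`
be a diagonal of `S` of maximal cyclic length `k < n`. Let `[x, y]` in `S` cross the diameter
`[d, d + n]`, with `x` on the arc from `d` to `d + n`. Since it does not cross `[a, d]`, `y` comes
no later than `a`; since it does not cross the rotated diagonal `[a + n, d + n]`, `x` comes no later
than `a + n`. Then both arcs between `x` and `y` are longer than `k`, so `[x, y]` is a diameter or
longer than `[a, d]`. Hence `[d, d + n]` crosses no diagonal of `S`, and belongs to `S` by
maximality.
-/

section Positions

variable {N : ℕ} [NeZero N]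

theorem val_sub_ne_val_sub {w x y : ZMod N} (h : x ≠ y) : (x - w).val ≠ (y - w).val :=
  fun hv => h (sub_left_inj.mp (ZMod.val_injective N hv))

theorem val_sub_of_val_sub_le {w x y : ZMod N} (h : (y - w).val ≤ (x - w).val) :
    (x - y).val = (x - w).val - (y - w).val := by
  rw [← sub_sub_sub_cancel_right x y w, ZMod.val_sub h]

theorem val_sub_of_val_sub_lt {w x y : ZMod N} (h : (x - w).val < (y - w).val) :
    (x - y).val = N + (x - w).val - (y - w).val := by
  have hsum : x - w = (x - y) + (y - w) := by abel
  have hxy := (x - y).val_lt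
  by_cases hN : N ≤ (x - y).val + (y - w).val
  · rw [hsum, ZMod.val_add_of_le hN]
    omega
  · rw [hsum, ZMod.val_add_of_lt (by omega)] at h
    omega

end Positions

theorem half_add_half (n : ℕ) : (n : ZMod (2 * n)) + n = 0 := by
  rw [← Nat.cast_add, ← two_mul, ZMod.natCast_self]

section Crossing

variable {n : ℕ} [NeZero n]

theorem val_half : (n : ZMod (2 * n)).val = n :=
  ZMod.val_cast_of_lt (by have := NeZero.pos n; omega)

theorem val_add_half (z : ZMod (2 * n)) :
    (z + n).val = if z.val < n then z.val + n else z.val - n := by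
  have hz := z.val_lt
  split_ifs with h
  · rw [ZMod.val_add_of_lt (by rw [val_half]; omega), val_half]
  · rw [ZMod.val_add_of_le (by rw [val_half]; omega), val_half]
    omega

theorem eq_add_half_of_val_sub {x y : ZMod (2 * n)} (h : (y - x).val = n) : y = x + n :=
  sub_eq_iff_eq_add'.mp (ZMod.val_injective _ (h.trans val_half.symm))

theorem crosses_of_interleaved {w a b c e : ZMod (2 * n)}
    (hac : (a - w).val < (c - w).val) (hcb : (c - w).val < (b - w).val)
    (hbe : (b - w).val < (e - w).val) : Crosses n s(a, b) s(c, e) := by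
  have hca := val_sub_of_val_sub_le hac.le
  have hba := val_sub_of_val_sub_le (hac.trans hcb).le
  have hea := val_sub_of_val_sub_le (hac.trans (hcb.trans hbe)).le
  refine ⟨a, b, c, e, rfl, rfl, ?_, ?_, ?_, ?_, Or.inl ⟨?_, ?_⟩⟩
  all_goals first | rintro rfl; omega | (simp only [StrictBtw]; omega)

theorem crosses_of_interleaved' {w a b c e : ZMod (2 * n)}
    (hca : (c - w).val < (a - w).val) (hae : (a - w).val < (e - w).val)
    (heb : (e - w).val < (b - w).val) : Crosses n s(a, b) s(c, e) := by
  have hca' := val_sub_of_val_sub_lt hca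
  have hba := val_sub_of_val_sub_le (hae.trans heb).le
  have hea := val_sub_of_val_sub_le hae.le
  have hb := (b - w).val_lt
  refine ⟨a, b, c, e, rfl, rfl, ?_, ?_, ?_, ?_, Or.inr ⟨?_, ?_⟩⟩
  all_goals first | rintro rfl; omega | (simp only [StrictBtw]; omega)

theorem Crosses.exists_interleaved {p q : Sym2 (ZMod (2 * n))} (h : Crosses n p q) :
    ∃ a b c e, p = s(a, b) ∧ q = s(c, e) ∧
      0 < (c - a).val ∧ (c - a).val < (b - a).val ∧ (b - a).val < (e - a).val := by
  obtain ⟨a, b, c, e, rfl, rfl, hca, hcb, hea, heb, hxor⟩ := h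
  have hc0 := val_sub_ne_val_sub (w := a) hca
  have hcb' := val_sub_ne_val_sub (w := a) hcb
  have he0 := val_sub_ne_val_sub (w := a) hea
  have heb' := val_sub_ne_val_sub (w := a) heb
  rw [sub_self, ZMod.val_zero] at hc0 he0
  simp only [StrictBtw] at hxor
  rcases hxor with ⟨hc, he⟩ | ⟨he, hc⟩
  · exact ⟨a, b, c, e, rfl, rfl, hc.1, hc.2, by omega⟩
  · exact ⟨a, b, e, c, rfl, Sym2.eq_swap, he.1, he.2, by omega⟩

theorem Crosses.symm {p q : Sym2 (ZMod (2 * n))} (h : Crosses n p q) : Crosses n q p := by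
  obtain ⟨a, b, c, e, rfl, rfl, hc0, hcb, hbe⟩ := h.exists_interleaved
  exact crosses_of_interleaved' (w := a) (by rwa [sub_self, ZMod.val_zero]) hcb hbe

theorem Crosses.exists_across_diameter {d : ZMod (2 * n)} {q : Sym2 (ZMod (2 * n))}
    (h : Crosses n s(d, d + n) q) :
    ∃ x y, q = s(x, y) ∧ 0 < (x - d).val ∧ (x - d).val < n ∧ n < (y - d).val := by
  obtain ⟨a, b, c, e, hab, rfl, hc0, hcb, hbe⟩ := h.exists_interleaved
  rcases Sym2.eq_iff.mp hab with ⟨rfl, rfl⟩ | ⟨rfl, rfl⟩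
  · rw [add_sub_cancel_left, val_half] at hcb hbe
    exact ⟨c, e, rfl, hc0, hcb, hbe⟩
  · have hdn : d - (d + n) = n := by
      rw [sub_add_cancel_left, neg_eq_of_add_eq_zero_left (half_add_half n)]
    have hc : c - d = c - (d + n) + n := by ring
    have he : e - d = e - (d + n) + n := by ring
    rw [hdn, val_half] at hcb hbe
    have hcval := val_add_half (c - (d + (n : ZMod (2 * n))))
    have heval := val_add_half (e - (d + (n : ZMod (2 * n))))
    rw [← hc, if_pos hcb] at hcval
    rw [← he, if_neg (by omega)] at heval
    have he_lt := (e - (d + (n : ZMod (2 * n)))).val_lt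
    exact ⟨e, c, Sym2.eq_swap, by omega, by omega, by omega⟩

theorem crosses_of_diameter_ne {a b : ZMod (2 * n)} (h : s(b, b + n) ≠ s(a, a + n)) :
    Crosses n s(a, a + n) s(b, b + n) := by
  have hba : b ≠ a := by rintro rfl; exact h rfl
  have hban : b ≠ a + n := by
    rintro rfl
    apply h
    rw [add_assoc, half_add_half n, add_zero, Sym2.eq_swap]
  have hp0 := val_sub_ne_val_sub (w := a) hba
  have hpn := val_sub_ne_val_sub (w := a) hban
  have hbn := val_add_half (b - a)
  have hp := (b - a).val_lt
  rw [sub_self, ZMod.val_zero] at hp0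
  rw [add_sub_cancel_left, val_half] at hpn
  rw [← add_sub_right_comm] at hbn
  have ha0 : (a - a).val = 0 := by rw [sub_self, ZMod.val_zero]
  have han : (a + n - a).val = n := by rw [add_sub_cancel_left, val_half]
  rcases lt_or_gt_of_ne hpn with hlt | hgt
  · rw [if_pos hlt] at hbn
    exact crosses_of_interleaved (w := a) (by omega) (by omega) (by omega)
  · rw [if_neg (by omega)] at hbn
    rw [Sym2.eq_swap (a := b)]
    exact crosses_of_interleaved (w := a) (by omega) (by omega) (by omega)

end Crossing

theorem isDiagonal_diameter {n : ℕ} (hn : 2 ≤ n) (d : ZMod (2 * n)) :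
    IsDiagonal n s(d, d + n) := by
  have : NeZero n := ⟨by omega⟩
  have hn0 : (n : ZMod (2 * n)) ≠ 0 := fun h => by
    have := congrArg ZMod.val h
    rw [val_half, ZMod.val_zero] at this
    omega
  have hn1 : (n : ZMod (2 * n)) ≠ 1 := fun h => by
    have := congrArg ZMod.val h
    rw [val_half, ZMod.val_one_eq_one_mod, Nat.mod_eq_of_lt (by omega)] at this
    omega
  have hn_succ : (n : ZMod (2 * n)) + 1 ≠ 0 := fun h => by
    have := congrArg ZMod.val h
    rw [← Nat.cast_succ, ZMod.val_cast_of_lt (by omega), ZMod.val_zero] at this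
    omega
  intro u v huv
  rcases Sym2.eq_iff.mp huv with ⟨rfl, rfl⟩ | ⟨rfl, rfl⟩ <;> simp_all [add_assoc]

section Triangulation

variable {n : ℕ} {S : Set (Sym2 (ZMod (2 * n)))}

theorem IsTriangulation.diameter_mem (hS : IsTriangulation n S) (hn : 2 ≤ n)
    (d : ZMod (2 * n))
    (hacross : ∀ x y, s(x, y) ∈ S → 0 < (x - d).val → (x - d).val < n → n < (y - d).val →
      False) :
    s(d, d + n) ∈ S := by
  have : NeZero n := ⟨by omega⟩
  have hnot : ∀ q ∈ S, ¬ Crosses n s(d, d + n) q := fun q hq h => by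
    obtain ⟨x, y, rfl, hx0, hxn, hyn⟩ := h.exists_across_diameter
    exact hacross x y hq hx0 hxn hyn
  exact hS.2.2 _ (isDiagonal_diameter hn d) fun q hq =>
    ⟨hnot q hq, fun h => hnot q hq h.symm⟩

variable [NeZero n]

theorem exists_longest_short_diagonal (hno : ∀ u : ZMod (2 * n), s(u, u + n) ∉ S)
    (hne : S.Nonempty) :
    ∃ a d, s(a, d) ∈ S ∧ (d - a).val < n ∧
      ∀ u v, s(u, v) ∈ S → (v - u).val < n → (v - u).val ≤ (d - a).val := by
  set P : Set (ZMod (2 * n) × ZMod (2 * n)) := {p | s(p.1, p.2) ∈ S ∧ (p.2 - p.1).val < n}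
  have hP : P.Nonempty := by
    obtain ⟨q, hq⟩ := hne
    induction q using Sym2.ind with
    | _ x y =>
      rcases lt_or_ge (y - x).val n with h | h
      · exact ⟨(x, y), hq, h⟩
      · have hyx_lt := (y - x).val_lt
        have hyx : (y - x).val ≠ n := fun h' => hno x (eq_add_half_of_val_sub h' ▸ hq)
        have hxy := val_sub_of_val_sub_lt (w := x) (x := x) (y := y)
          (by rw [sub_self, ZMod.val_zero]; omega)
        rw [sub_self, ZMod.val_zero] at hxy
        exact ⟨(y, x), Sym2.eq_swap ▸ hq, by simp only; omega⟩
  obtain ⟨⟨a, d⟩, ⟨had, hlt⟩, hmax⟩ := P.exists_max_image (fun p => (p.2 - p.1).val) P.toFinite hP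
  exact ⟨a, d, had, hlt, fun u v huv h => hmax (u, v) ⟨huv, h⟩⟩

theorem IsTriangulation.not_across_of_longest (hS : IsTriangulation n S)
    (hCS : IsCentrallySymmetric n S) (hno : ∀ u : ZMod (2 * n), s(u, u + n) ∉ S)
    {a d : ZMod (2 * n)} (had : s(a, d) ∈ S) (hlt : (d - a).val < n)
    (hmax : ∀ u v, s(u, v) ∈ S → (v - u).val < n → (v - u).val ≤ (d - a).val)
    {x y : ZMod (2 * n)} (hxy : s(x, y) ∈ S)
    (hx0 : 0 < (x - d).val) (hxn : (x - d).val < n) (hyn : n < (y - d).val) : False := by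
  have hy := (y - d).val_lt
  have hd0 : (d - d).val = 0 := by rw [sub_self, ZMod.val_zero]
  have hk0 := val_sub_ne_val_sub (w := a) (hS.1 _ had a d rfl).1
  rw [sub_self, ZMod.val_zero] at hk0
  have hpos_a := val_sub_of_val_sub_lt (w := a) (x := a) (y := d)
    (by rw [sub_self, ZMod.val_zero]; omega)
  rw [sub_self, ZMod.val_zero] at hpos_a
  have hy_before_a : (y - d).val ≤ 2 * n - (d - a).val := by
    by_contra! h
    refine hS.2.1 _ had _ hxy ?_
    rw [Sym2.eq_swap]
    exact crosses_of_interleaved (w := d) (by omega) (by omega) (by omega)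
  have hx_before_rotated_a : (x - d).val ≤ n - (d - a).val := by
    by_contra! h
    have hrot : s(a + n, d + n) ∈ S := by simpa using hCS _ had
    have han := val_add_half (a - d)
    have hdn : (d + n - d).val = n := by rw [add_sub_cancel_left, val_half]
    rw [← add_sub_right_comm, if_neg (by omega)] at han
    exact hS.2.1 _ hrot _ hxy (crosses_of_interleaved (w := d) (by omega) (by omega) (by omega))
  have hyx := val_sub_of_val_sub_le (w := d) (x := y) (y := x) (by omega)
  rcases lt_trichotomy (y - x).val n with h | h | h
  · have := hmax x y hxy h
    omega
  · exact hno x (eq_add_half_of_val_sub h ▸ hxy)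
  · have hxy' := val_sub_of_val_sub_lt (w := d) (x := x) (y := y) (by omega)
    have := hmax y x (Sym2.eq_swap ▸ hxy) (by omega)
    omega

end Triangulation

/-- Every centrally symmetric triangulation of a regular `2n`-gon contains exactly
one diameter. -/
theorem stmt_12 (n : ℕ) (hn : 2 ≤ n) (S : Set (Sym2 (ZMod (2 * n))))
    (hS : IsTriangulation n S) (hCS : IsCentrallySymmetric n S) :
    ∃! p, p ∈ S ∧ IsDiameter n p := by
  have : NeZero n := ⟨by omega⟩
  have hex : ∃ a : ZMod (2 * n), s(a, a + n) ∈ S := by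
    by_contra! hno
    rcases S.eq_empty_or_nonempty with rfl | hne
    · exact hno 0 (hS.diameter_mem hn 0 fun _ _ h => h.elim)
    · obtain ⟨a, d, had, hlt, hmax⟩ := exists_longest_short_diagonal hno hne
      exact hno d (hS.diameter_mem hn d fun _ _ => hS.not_across_of_longest hCS hno had hlt hmax)
  obtain ⟨a, ha⟩ := hex
  refine ⟨s(a, a + n), ⟨ha, a, rfl⟩, ?_⟩
  rintro _ ⟨hb, b, rfl⟩
  by_contra hne
  exact hS.2.1 _ ha _ hb (crosses_of_diameter_ne hne)
end

section
/- In the cluster tube model (indecomposables (a,b) with a ∈ Z/n, b ≥ 1), let T = ⊕ T_i be a maximal rigid object (E(T_i,T_j)=0 for all i,j, where E is the combinatorial Ext-dimension) with all summands of quasi-length ≤ n-1, and let T_0=(1,l_0) have maximal quasi-length among the summands; then all summands of T lie in the wing determined by T_0, i.e., every summand (a', b') of T satisfies a' ≥ 1 and a' + b' ≤ 1 + l_0. -/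
/-- If `T` is a maximal rigid object of the cluster tube and `T_0 = (1, l_0)` is a
summand of maximal quasi-length, then every summand `(a', b')` of `T` lies in the
wing determined by `T_0`, i.e. `((a' - 1) mod n) + b' ≤ l_0`. -/
theorem stmt_16 (n : ℕ) (hn : 2 ≤ n) (S : Finset (ZMod n × ℕ))
    (hS : IsMaxRigid n S) (l0 : ℕ) (hT0 : ((1 : ZMod n), l0) ∈ S)
    (hmax : ∀ x ∈ S, x.2 ≤ l0) :
    ∀ x ∈ S, (x.1 - 1).val + x.2 ≤ l0 := by
  haveI : NeZero n := ⟨by omega⟩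
  obtain ⟨hlen, hrig, hmaxi⟩ := hS
  obtain ⟨hl1, hl2⟩ := hlen _ hT0
  simp only at hl1 hl2
  -- Step 1: every summand `(a,b)` satisfies `((a-1) mod n) + b ≤ n - 1`.
  have key : ∀ x ∈ S, (x.1 - 1).val + x.2 ≤ n - 1 := by
    rintro ⟨a, b⟩ hx
    obtain ⟨hb1, hb2⟩ := hlen _ hx
    have hbl : b ≤ l0 := hmax _ hx
    have hE := hrig _ hx _ hT0
    simp only [EDim, hDim] at hE
    show (a - 1).val + b ≤ n - 1
    by_contra hcon
    push_neg at hcon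
    have hsn : (a - 1).val < n := ZMod.val_lt _
    rcases le_or_gt (a - 1).val l0 with hsl | hsl
    · -- then `hDim T0 (a,b) = 1`
      by_cases hs0 : (a - 1).val = 0
      · omega
      · have : (1 ≤ ((a : ZMod n) - 1).val ∧ ((a : ZMod n) - 1).val ≤ l0 ∧
            l0 + 1 ≤ ((a : ZMod n) - 1).val + b) := ⟨by omega, hsl, by omega⟩
        rw [if_pos this] at hE
        omega
    · -- then `hDim (a,b) T0 = 1`
      have ha1 : a - 1 ≠ 0 := fun h => by simp [h] at hsl
      have ht : ((1 : ZMod n) - a).val = n - (a - 1).val := by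
        have : (1 : ZMod n) - a = -(a - 1) := by ring
        rw [this, ZMod.neg_val, if_neg ha1]
      have : (1 ≤ ((1 : ZMod n) - a).val ∧ ((1 : ZMod n) - a).val ≤ b ∧
          b + 1 ≤ ((1 : ZMod n) - a).val + l0) := by
        refine ⟨by omega, by omega, by omega⟩
      rw [if_pos this] at hE
      omega
  -- Step 2: take the maximum `m` of `((a-1) mod n) + b` over `S`.
  set f : ZMod n × ℕ → ℕ := fun x => (x.1 - 1).val + x.2 with hf
  set m : ℕ := S.sup f with hm
  have hmle : m ≤ n - 1 := Finset.sup_le key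
  have hml0 : l0 ≤ m := by
    have := Finset.le_sup (f := f) hT0
    simpa [hf] using this
  have hm1 : 1 ≤ m := le_trans hl1 hml0
  -- `z = (1, m)` is compatible with itself and with everything in `S`.
  have hz : ((1 : ZMod n), m) ∈ S := by
    refine hmaxi _ hm1 hmle ?_ ?_
    · simp [EDim, hDim]
    · rintro ⟨c, d⟩ hx
      have hfx : (c - 1).val + d ≤ m := Finset.le_sup (f := f) hx
      have h1 : hDim n ((1 : ZMod n), m) (c, d) = 0 := by
        rw [hDim, if_neg]
        rintro ⟨-, -, h3⟩
        simp only at h3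
        omega
      have h2 : hDim n (c, d) ((1 : ZMod n), m) = 0 := by
        rw [hDim, if_neg]
        rintro ⟨h1', h2', -⟩
        simp only at h1' h2'
        by_cases hc1 : c - 1 = 0
        · have : (1 : ZMod n) - c = 0 := by
            have : (1 : ZMod n) - c = -(c - 1) := by ring
            rw [this, hc1, neg_zero]
          rw [this] at h1'
          simp [ZMod.val_zero] at h1'
        · have ht : ((1 : ZMod n) - c).val = n - (c - 1).val := by
            have : (1 : ZMod n) - c = -(c - 1) := by ring
            rw [this, ZMod.neg_val, if_neg hc1]
          have hsn : (c - 1).val < n := ZMod.val_lt _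
          have hs1 : 1 ≤ (c - 1).val := by
            rcases Nat.eq_zero_or_pos (c - 1).val with h | h
            · exact absurd ((ZMod.val_eq_zero _).mp h) hc1
            · exact h
          omega
      rw [EDim, h1, h2]
  -- conclude
  intro x hx
  have hfx : f x ≤ m := Finset.le_sup (f := f) hx
  have := hmax _ hz
  simp only at this
  simp only [hf] at hfx
  omega
end

section
/- In the combinatorial model of the cluster tube of rank n, every maximal rigid object has its top summand of quasi-length exactly n-1: if T is rigid with all summands in the wing of a summand (m, l_0) with l_0 < n-1, then adjoining Y = (m, n-1) preserves rigidity, so T was not maximal. -/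
/-- If all summands of a rigid object `T` of the cluster tube of rank `n` lie in the
wing of `(m, l_0)` with `l_0 < n - 1`, then adjoining `Y = (m, n-1)` preserves
rigidity: `E(Y,Y) = 0` and `E(Y, T_i) = 0` for every summand `T_i` of `T`.
Hence a maximal rigid object has its top summand of quasi-length exactly `n-1`. -/
theorem stmt_17 (n : ℕ) (hn : 2 ≤ n) (m : ZMod n) (l0 : ℕ)
    (hl1 : 1 ≤ l0) (hl2 : l0 ≤ n - 1)
    (S : Finset (ZMod n × ℕ))
    (hql : ∀ x ∈ S, 1 ≤ x.2 ∧ x.2 ≤ n - 1)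
    (hrigid : ∀ x ∈ S, ∀ y ∈ S, EDim n x y = 0)
    (hwing : ∀ x ∈ S, (x.1 - m).val + x.2 ≤ l0) :
    EDim n (m, n - 1) (m, n - 1) = 0 ∧ ∀ x ∈ S, EDim n (m, n - 1) x = 0 := by
  haveI : NeZero n := ⟨by omega⟩
  constructor
  · simp [EDim, hDim]
  · intro x hx
    have hw := hwing x hx
    have hq := hql x hx
    unfold EDim hDim
    have h1 : ¬ (1 ≤ (x.1 - m).val ∧ (x.1 - m).val ≤ n - 1 ∧
        n - 1 + 1 ≤ (x.1 - m).val + x.2) := by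
      rintro ⟨ha, hb, hc⟩; omega
    rw [if_neg h1]
    have h2 : ¬ (1 ≤ (m - x.1).val ∧ (m - x.1).val ≤ x.2 ∧
        x.2 + 1 ≤ (m - x.1).val + (n - 1)) := by
      rintro ⟨ha, hb, hc⟩
      have he : m - x.1 = -(x.1 - m) := by ring
      rw [he, ZMod.neg_val] at ha hb
      by_cases h0 : x.1 - m = 0
      · simp [h0] at ha
      · simp [h0] at ha hb
        have hv : (x.1 - m).val < n := ZMod.val_lt _
        omega
    rw [if_neg h2]
end
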